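/- The modal logic K (classical modal logic with the K axiom and necessitation) has the uniform interpolation property: for every formula A and atom p there exist p-free formulas ∀pA and ∃pA with K ⊢ ∀pA → A, K ⊢ A → ∃pA, and for every p-free B: K ⊢ B → A implies K ⊢ B → ∀pA, and K ⊢ A → B implies K ⊢ ∃pA → B. -/

import Mathlib

inductive MF : Type where
  | var : Nat → MF
  | bot : MF
  | imp : MF → MF → MF
  | box : MF → MF
  deriving DecidableEq

def MF.occurs (p : Nat) : MF → Bool
  | .var q => p == q
  | .bot => false
  | .imp a b => a.occurs p || b.occurs p
  | .box a => a.occurs p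

def pFree (p : Nat) (φ : MF) : Prop := φ.occurs p = false

/-- The smallest normal modal logic `K`: classical propositional logic plus the
axiom `□(A → B) → (□A → □B)` and the necessitation rule. -/
inductive KThm : MF → Prop where
  | a1 (A B : MF) : KThm (A.imp (B.imp A))
  | a2 (A B C : MF) : KThm ((A.imp (B.imp C)).imp ((A.imp B).imp (A.imp C)))
  | a3 (A B : MF) : KThm (((A.imp MF.bot).imp (B.imp MF.bot)).imp (B.imp A))
  | axK (A B : MF) : KThm ((MF.box (A.imp B)).imp ((MF.box A).imp (MF.box B)))
  | mp (A B : MF) : KThm (A.imp B) → KThm A → KThm B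
  | nec (A : MF) : KThm A → KThm (MF.box A)

/-!
The proof is semantic, through Kripke completeness of `K`. Let `S` be the atoms of `A` other
than `p` and `n` the modal depth of `A`. The depth-`n` type of a world over `S` (its atoms in `S`
and, recursively, the set of depth-`(n - 1)` types of its successors) ranges over a finite set,
and each type is defined by a characteristic formula over `S`. `∃pA` is the disjunction of the
characteristic formulas of the types realised by models of `A`.

If `A ⊨ B` with `B` free of `p`, and `w'` satisfies `∃pA`, there is a world `w ⊨ A` of the same
type as `w'`. The amalgam of the two models is `n`-bisimilar to `w` over `S ∪ {p}`, so it
satisfies `A` and hence `B`, and it is bisimilar to `w'` over the atoms other than `p`, so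
`w' ⊨ B`. Dually, `∀pA = ¬∃p¬A`.
-/

namespace MF

def neg (A : MF) : MF := A.imp bot

def or (A B : MF) : MF := A.neg.imp B

def and (A B : MF) : MF := (A.imp B.neg).neg

def dia (A : MF) : MF := A.neg.box.neg

def conj (L : List MF) : MF := L.foldr MF.and bot.neg

def disj (L : List MF) : MF := L.foldr MF.or bot

def depth : MF → ℕ
  | var _ => 0
  | bot => 0
  | imp A B => max A.depth B.depth
  | box A => A.depth + 1

def vars : MF → Finset ℕ
  | var q => {q}
  | bot => ∅
  | imp A B => A.vars ∪ B.vars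
  | box A => A.vars

@[simp] theorem occurs_neg {p : ℕ} {A : MF} : A.neg.occurs p = A.occurs p := by
  simp [neg, occurs]

@[simp] theorem occurs_and {p : ℕ} {A B : MF} :
    (A.and B).occurs p = (A.occurs p || B.occurs p) := by
  simp [MF.and, neg, occurs]

@[simp] theorem occurs_or {p : ℕ} {A B : MF} :
    (A.or B).occurs p = (A.occurs p || B.occurs p) := by
  simp [MF.or, neg, occurs]

@[simp] theorem occurs_dia {p : ℕ} {A : MF} : A.dia.occurs p = A.occurs p := by
  simp [dia, occurs]

@[simp] theorem occurs_conj {p : ℕ} {L : List MF} :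
    (conj L).occurs p = true ↔ ∃ A ∈ L, A.occurs p = true := by
  induction L with
  | nil => simp [conj, occurs]
  | cons A L ih => simp_all [conj]

@[simp] theorem occurs_disj {p : ℕ} {L : List MF} :
    (disj L).occurs p = true ↔ ∃ A ∈ L, A.occurs p = true := by
  induction L with
  | nil => simp [disj, occurs]
  | cons A L ih => simp_all [disj]

theorem mem_vars_of_occurs {A : MF} {q : ℕ} (h : A.occurs q = true) : q ∈ A.vars := by
  induction A with
  | var r => simp_all [occurs, vars]
  | bot => simp [occurs] at h
  | imp A B ihA ihB =>
    simp only [occurs, Bool.or_eq_true] at h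
    exact Finset.mem_union.2 (h.imp ihA ihB)
  | box A ih => exact ih h

end MF

namespace KThm

theorem imp_self (A : MF) : KThm (A.imp A) :=
  mp _ _ (mp _ _ (a2 A (A.imp A) A) (a1 A (A.imp A))) (a1 A A)

theorem bot_imp (A : MF) : KThm (MF.bot.imp A) :=
  mp _ _ (a3 A .bot) (mp _ _ (a1 (MF.bot.imp .bot) A.neg) (imp_self .bot))

end KThm

-- Local consequence: necessitation applies to theorems only, not to hypotheses from `Γ`.
inductive KDerives (Γ : Set MF) : MF → Prop where
  | thm {A : MF} : KThm A → KDerives Γ A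
  | mem {A : MF} : A ∈ Γ → KDerives Γ A
  | mp {A B : MF} : KDerives Γ (A.imp B) → KDerives Γ A → KDerives Γ B

namespace KDerives

variable {Γ Δ : Set MF} {A B : MF}

theorem mono (hΓΔ : Γ ⊆ Δ) (h : KDerives Γ A) : KDerives Δ A := by
  induction h with
  | thm h => exact thm h
  | mem h => exact mem (hΓΔ h)
  | mp _ _ ih₁ ih₂ => exact mp ih₁ ih₂

theorem imp_intro (h : KDerives (insert B Γ) A) : KDerives Γ (B.imp A) := by
  induction h with
  | @thm A h => exact thm (KThm.mp _ _ (KThm.a1 A B) h)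
  | @mem A h =>
    rcases h with rfl | h
    · exact thm (KThm.imp_self _)
    · exact mp (thm (KThm.a1 A B)) (mem h)
  | @mp X Y _ _ ih₁ ih₂ => exact mp (mp (thm (KThm.a2 B X Y)) ih₁) ih₂

theorem kthm_of_empty (h : KDerives ∅ A) : KThm A := by
  induction h with
  | thm h => exact h
  | mem h => exact absurd h (Set.notMem_empty _)
  | mp _ _ ih₁ ih₂ => exact KThm.mp _ _ ih₁ ih₂

theorem box (h : KDerives {B | B.box ∈ Γ} A) : KDerives Γ A.box := by
  induction h with
  | thm h => exact thm (KThm.nec _ h)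
  | mem h => exact mem h
  | @mp X Y _ _ ih₁ ih₂ => exact mp (mp (thm (KThm.axK X Y)) ih₁) ih₂

theorem exists_mem_of_sUnion {c : Set (Set MF)} (hc : IsChain (· ⊆ ·) c) (hne : c.Nonempty)
    (h : KDerives (⋃₀ c) A) : ∃ s ∈ c, KDerives s A := by
  induction h with
  | thm h => exact hne.imp fun s hs => ⟨hs, thm h⟩
  | mem h =>
    obtain ⟨s, hs, hA⟩ := h
    exact ⟨s, hs, mem hA⟩
  | mp _ _ ih₁ ih₂ =>
    obtain ⟨s₁, hs₁, h₁⟩ := ih₁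
    obtain ⟨s₂, hs₂, h₂⟩ := ih₂
    rcases hc.total hs₁ hs₂ with h12 | h21
    · exact ⟨s₂, hs₂, mp (h₁.mono h12) h₂⟩
    · exact ⟨s₁, hs₁, mp h₁ (h₂.mono h21)⟩

end KDerives

theorem KThm.not_not_imp (A : MF) : KThm (A.neg.neg.imp A) := by
  have h : KDerives (insert A.neg.neg (insert A.neg ∅)) .bot :=
    .mp (.mem (.inl rfl)) (.mem (.inr (.inl rfl)))
  exact mp _ _ (a3 A A.neg.neg) h.imp_intro.imp_intro.kthm_of_empty

def Consistent (Γ : Set MF) : Prop := ¬ KDerives Γ .bot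

theorem exists_maximal_consistent_superset {Γ : Set MF} (hΓ : Consistent Γ) :
    ∃ Δ, Γ ⊆ Δ ∧ Maximal Consistent Δ := by
  refine zorn_subset_nonempty {Δ | Consistent Δ} (fun c hcons hc hne => ?_) Γ hΓ
  refine ⟨⋃₀ c, fun h => ?_, fun s => Set.subset_sUnion_of_mem⟩
  obtain ⟨s, hs, hbot⟩ := KDerives.exists_mem_of_sUnion hc hne h
  exact hcons hs hbot

namespace Consistent

variable {Δ : Set MF} {A : MF}

theorem mem_of_derives (hΔ : Maximal Consistent Δ) (h : KDerives Δ A) : A ∈ Δ := by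
  refine hΔ.mem_of_prop_insert fun hbot => hΔ.prop ?_
  exact .mp hbot.imp_intro h

theorem derives_bot_insert (hΔ : Maximal Consistent Δ) (h : A ∉ Δ) :
    KDerives (insert A Δ) .bot := by
  by_contra hcons
  exact h (hΔ.mem_of_prop_insert hcons)

end Consistent

structure Kripke where
  W : Type
  R : W → W → Prop
  V : W → ℕ → Prop

namespace Kripke

def Sat (M : Kripke) : M.W → MF → Prop
  | w, .var q => M.V w q
  | _, .bot => False
  | w, .imp A B => M.Sat w A → M.Sat w B
  | w, .box A => ∀ v, M.R w v → M.Sat v A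

variable {M : Kripke} {w : M.W} {A B : MF}

@[simp] theorem sat_neg : M.Sat w A.neg ↔ ¬ M.Sat w A := Iff.rfl

@[simp] theorem sat_and : M.Sat w (A.and B) ↔ M.Sat w A ∧ M.Sat w B := by
  simp only [MF.and, sat_neg, Sat]
  tauto

@[simp] theorem sat_or : M.Sat w (A.or B) ↔ M.Sat w A ∨ M.Sat w B := by
  simp only [MF.or, Sat, sat_neg]
  tauto

@[simp] theorem sat_dia : M.Sat w A.dia ↔ ∃ v, M.R w v ∧ M.Sat v A := by
  simp [MF.dia, Sat]

@[simp] theorem sat_conj {L : List MF} : M.Sat w (MF.conj L) ↔ ∀ A ∈ L, M.Sat w A := by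
  induction L with
  | nil => simp [MF.conj, Sat]
  | cons A L ih => simp_all [MF.conj]

@[simp] theorem sat_disj {L : List MF} : M.Sat w (MF.disj L) ↔ ∃ A ∈ L, M.Sat w A := by
  induction L with
  | nil => simp [MF.disj, Sat]
  | cons A L ih => simp_all [MF.disj]

end Kripke

def MF.Valid (A : MF) : Prop := ∀ (M : Kripke) (w : M.W), M.Sat w A

theorem KThm.valid {A : MF} (h : KThm A) : A.Valid := by
  induction h with
  | a1 | a2 | a3 => intro M w; simp only [Kripke.Sat]; tauto
  | axK A B => intro M w hAB hA v hv; exact hAB v hv (hA v hv)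
  | mp A B _ _ ih₁ ih₂ => intro M w; exact ih₁ M w (ih₂ M w)
  | nec A _ ih => intro M w v _; exact ih M v

def canonicalModel : Kripke where
  W := {Γ : Set MF // Maximal Consistent Γ}
  R Γ Δ := {A | A.box ∈ Γ.1} ⊆ Δ.1
  V Γ q := MF.var q ∈ Γ.1

theorem canonicalModel.sat_iff_mem (A : MF) (Γ : canonicalModel.W) :
    canonicalModel.Sat Γ A ↔ A ∈ Γ.1 := by
  induction A generalizing Γ with
  | var q => rfl
  | bot => exact ⟨False.elim, fun h => Γ.2.prop (.mem h)⟩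
  | imp A B ihA ihB =>
    simp only [Kripke.Sat, ihA, ihB]
    refine ⟨fun h => Consistent.mem_of_derives Γ.2 (KDerives.imp_intro ?_),
      fun h hA => Consistent.mem_of_derives Γ.2 (.mp (.mem h) (.mem hA))⟩
    by_cases hA : A ∈ Γ.1
    · exact .mem (Set.mem_insert_of_mem _ (h hA))
    · exact .mp (.thm (KThm.bot_imp B)) (Consistent.derives_bot_insert Γ.2 hA)
  | box A ih =>
    simp only [Kripke.Sat, ih]
    refine ⟨fun h => ?_, fun h Δ hΓΔ => hΓΔ h⟩
    by_contra hA
    -- otherwise `{B | □B ∈ Γ}` derives `¬¬A`, hence `A`, and then `Γ` derives `□A`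
    have hcons : Consistent (insert A.neg {B | B.box ∈ Γ.1}) := fun hbot =>
      hA (Consistent.mem_of_derives Γ.2
        (KDerives.box (.mp (.thm (KThm.not_not_imp A)) hbot.imp_intro)))
    obtain ⟨Δ, hsub, hΔ⟩ := exists_maximal_consistent_superset hcons
    have hAΔ : A ∈ Δ := h ⟨Δ, hΔ⟩ fun B hB => hsub (Set.mem_insert_of_mem _ hB)
    exact hΔ.prop (.mp (.mem (hsub (Set.mem_insert _ _))) (.mem hAΔ))

theorem KThm.of_valid {A : MF} (h : A.Valid) : KThm A := by
  by_contra hA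
  have hcons : Consistent (insert A.neg ∅) := fun hbot =>
    hA (mp _ _ (not_not_imp A) hbot.imp_intro.kthm_of_empty)
  obtain ⟨Δ, hsub, hΔ⟩ := exists_maximal_consistent_superset hcons
  have hAΔ : A ∈ Δ := (canonicalModel.sat_iff_mem A ⟨Δ, hΔ⟩).1 (h _ _)
  exact hΔ.prop (.mp (.mem (hsub (Set.mem_insert _ _))) (.mem hAΔ))

theorem kthm_iff_valid {A : MF} : KThm A ↔ A.Valid := ⟨KThm.valid, KThm.of_valid⟩

structure BoundedBisim (P : ℕ → Prop) (M M' : Kripke) (Z : ℕ → M.W → M'.W → Prop) : Prop where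
  atom {k : ℕ} {u : M.W} {v : M'.W} {q : ℕ} : Z k u v → P q → (M.V u q ↔ M'.V v q)
  forth {k : ℕ} {u u₁ : M.W} {v : M'.W} : Z (k + 1) u v → M.R u u₁ → ∃ v₁, M'.R v v₁ ∧ Z k u₁ v₁
  back {k : ℕ} {u : M.W} {v v₁ : M'.W} : Z (k + 1) u v → M'.R v v₁ → ∃ u₁, M.R u u₁ ∧ Z k u₁ v₁

theorem BoundedBisim.sat_iff {P : ℕ → Prop} {M M' : Kripke} {Z : ℕ → M.W → M'.W → Prop}
    (hZ : BoundedBisim P M M' Z) {A : MF} (hA : ∀ q, A.occurs q = true → P q)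
    {k : ℕ} (hk : A.depth ≤ k) {u : M.W} {v : M'.W} (huv : Z k u v) :
    M.Sat u A ↔ M'.Sat v A := by
  induction A generalizing k u v with
  | var q => exact hZ.atom huv (hA q (by simp [MF.occurs]))
  | bot => exact Iff.rfl
  | imp A B ihA ihB =>
    simp only [MF.occurs, Bool.or_eq_true, MF.depth, max_le_iff] at hA hk
    exact imp_congr (ihA (fun q h => hA q (.inl h)) hk.1 huv)
      (ihB (fun q h => hA q (.inr h)) hk.2 huv)
  | box A ih =>
    obtain _ | k := k
    · simp [MF.depth] at hk
    have hk' : A.depth ≤ k := by simpa [MF.depth] using hk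
    constructor
    · intro h v₁ hv₁
      obtain ⟨u₁, hu₁, hZ₁⟩ := hZ.back huv hv₁
      exact (ih hA hk' hZ₁).1 (h u₁ hu₁)
    · intro h u₁ hu₁
      obtain ⟨v₁, hv₁, hZ₁⟩ := hZ.forth huv hu₁
      exact (ih hA hk' hZ₁).2 (h v₁ hv₁)

def NType (S : Finset ℕ) : ℕ → Type
  | 0 => Set S
  | n + 1 => Set S × Set (NType S n)

instance NType.finite (S : Finset ℕ) : ∀ n, Finite (NType S n)
  | 0 => inferInstanceAs (Finite (Set S))
  | n + 1 => have := NType.finite S n; inferInstanceAs (Finite (Set S × Set (NType S n)))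

def Kripke.ntype (M : Kripke) (S : Finset ℕ) : (n : ℕ) → M.W → NType S n
  | 0, w => {q : S | M.V w q}
  | n + 1, w => (({q : S | M.V w q}, M.ntype S n '' {v | M.R w v}) : Set S × Set (NType S n))

namespace NType

variable (S : Finset ℕ)

open Classical in
noncomputable def litFormula (a : Set S) : MF :=
  MF.conj (S.attach.toList.map fun q => if q ∈ a then .var q else (MF.var q).neg)

noncomputable def charFormula : (n : ℕ) → NType S n → MF
  | 0, a => litFormula S a
  | n + 1, (a, T) => (litFormula S a).and
      ((MF.conj (T.toFinite.toFinset.toList.map fun s => (charFormula n s).dia)).and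
        (MF.disj (T.toFinite.toFinset.toList.map (charFormula n))).box)

variable {S}

theorem occurs_litFormula {a : Set S} {p : ℕ} (h : (litFormula S a).occurs p = true) :
    p ∈ S := by
  classical
  simp only [litFormula, MF.occurs_conj, List.mem_map] at h
  obtain ⟨_, ⟨q, -, rfl⟩, hq⟩ := h
  split_ifs at hq <;> simp_all [MF.occurs]

theorem occurs_charFormula {n : ℕ} {t : NType S n} {p : ℕ}
    (h : (charFormula S n t).occurs p = true) : p ∈ S := by
  induction n with
  | zero => exact occurs_litFormula h
  | succ n ih =>
    obtain ⟨a, T⟩ := t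
    simp only [charFormula, MF.occurs_and, MF.occurs, Bool.or_eq_true, MF.occurs_conj,
      MF.occurs_disj, List.mem_map] at h
    rcases h with h | ⟨_, ⟨s, -, rfl⟩, h⟩ | ⟨_, ⟨s, -, rfl⟩, h⟩
    exacts [occurs_litFormula h, ih (by rwa [MF.occurs_dia] at h), ih h]

end NType

namespace Kripke

section

variable {M : Kripke} {S : Finset ℕ}

theorem sat_litFormula_iff {w : M.W} {a : Set S} :
    M.Sat w (NType.litFormula S a) ↔ {q : S | M.V w q} = a := by
  classical
  simp only [NType.litFormula, sat_conj, List.mem_map, Finset.mem_toList, Finset.mem_attach,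
    true_and, forall_exists_index, forall_apply_eq_imp_iff, Set.ext_iff, Set.mem_ofPred_eq]
  refine forall_congr' fun q => ?_
  split_ifs with hq <;> simp [Sat, hq]

theorem sat_charFormula_iff {n : ℕ} {w : M.W} {t : NType S n} :
    M.Sat w (NType.charFormula S n t) ↔ M.ntype S n w = t := by
  induction n generalizing w with
  | zero => exact sat_litFormula_iff
  | succ n ih =>
    obtain ⟨a, T⟩ := t
    simp only [NType.charFormula, sat_and, sat_litFormula_iff, sat_conj, sat_disj, List.mem_map,
      Finset.mem_toList, Set.Finite.mem_toFinset, forall_exists_index, and_imp,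
      forall_apply_eq_imp_iff₂, exists_exists_and_eq_and, sat_dia, Sat, ih, exists_eq_right']
    show _ ↔ ((_, _) : Set S × Set (NType S n)) = (a, T)
    rw [Prod.mk.injEq, Set.image_eq_iff_surjOn_mapsTo]
    rfl

end

variable (S : Finset ℕ) (M M' : Kripke)

theorem ntype_boundedBisim :
    BoundedBisim (· ∈ S) M M' fun k u v => M.ntype S k u = M'.ntype S k v where
  atom {k u v q} h hq := by
    have hatoms : {q : S | M.V u q} = {q : S | M'.V v q} := by
      cases k with
      | zero => exact h
      | succ k => exact congrArg Prod.fst h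
    exact Set.ext_iff.1 hatoms ⟨q, hq⟩
  forth {k u u₁ v} h hu₁ := by
    have himage : M.ntype S k '' {u₁ | M.R u u₁} = M'.ntype S k '' {v₁ | M'.R v v₁} :=
      congrArg Prod.snd h
    obtain ⟨v₁, hv₁, heq⟩ := himage ▸ Set.mem_image_of_mem (M.ntype S k) hu₁
    exact ⟨v₁, hv₁, heq.symm⟩
  back {k u v v₁} h hv₁ := by
    have himage : M.ntype S k '' {u₁ | M.R u u₁} = M'.ntype S k '' {v₁ | M'.R v v₁} :=
      congrArg Prod.snd h
    obtain ⟨u₁, hu₁, heq⟩ := himage.symm ▸ Set.mem_image_of_mem (M'.ntype S k) hv₁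
    exact ⟨u₁, hu₁, heq⟩

variable (p : ℕ)

/-- A world `(k, u, v)` pairs `k`-equivalent worlds of `M` and `M'`: it takes `p` from `u` and all
other atoms from `v`; `k` counts the remaining steps before the model continues as a copy of `M'`. -/
def amalgam : Kripke where
  W := (ℕ × M.W × M'.W) ⊕ M'.W
  R
    | .inl (k + 1, u, v), .inl (j, u₁, v₁) =>
      j = k ∧ M.R u u₁ ∧ M'.R v v₁ ∧ M.ntype S k u₁ = M'.ntype S k v₁
    | .inl (0, _, v), .inr v₁ => M'.R v v₁
    | .inr v, .inr v₁ => M'.R v v₁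
    | _, _ => False
  V
    | .inl (_, u, v), q => if q = p then M.V u q else M'.V v q
    | .inr v, q => M'.V v q

theorem amalgam_boundedBisim_left :
    BoundedBisim (· ∈ insert p S) (amalgam S M M' p) M
      fun k x u => ∃ v, x = .inl (k, u, v) ∧ M.ntype S k u = M'.ntype S k v where
  atom {k x u q} h hq := by
    obtain ⟨v, rfl, huv⟩ := h
    show (if q = p then M.V u q else M'.V v q) ↔ M.V u q
    split_ifs with hqp
    · rfl
    · exact ((ntype_boundedBisim S M M').atom huv ((Finset.mem_insert.1 hq).resolve_left hqp)).symm
  forth {k x y u} h hxy := by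
    obtain ⟨v, rfl, -⟩ := h
    rcases y with ⟨j, u₁, v₁⟩ | v₁
    · obtain ⟨rfl, hu₁, -, huv₁⟩ := hxy
      exact ⟨u₁, hu₁, v₁, rfl, huv₁⟩
    · exact hxy.elim
  back {k x u u₁} h hu₁ := by
    obtain ⟨v, rfl, huv⟩ := h
    obtain ⟨v₁, hv₁, huv₁⟩ := (ntype_boundedBisim S M M').forth huv hu₁
    exact ⟨.inl (k, u₁, v₁), ⟨rfl, hu₁, hv₁, huv₁⟩, v₁, rfl, huv₁⟩

theorem amalgam_boundedBisim_right :
    BoundedBisim (· ≠ p) (amalgam S M M' p) M' fun _ x v =>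
      (∃ k u, x = .inl (k, u, v) ∧ M.ntype S k u = M'.ntype S k v) ∨ x = .inr v where
  atom {k x v q} h hq := by
    rcases h with ⟨k, u, rfl, -⟩ | rfl
    · exact (if_neg hq).to_iff
    · rfl
  forth {k x y v} h hxy := by
    rcases h with ⟨_ | k, u, rfl, -⟩ | rfl <;> rcases y with ⟨j, u₁, v₁⟩ | v₁
    · exact hxy.elim
    · exact ⟨v₁, hxy, .inr rfl⟩
    · obtain ⟨rfl, -, hv₁, huv₁⟩ := hxy
      exact ⟨v₁, hv₁, .inl ⟨j, u₁, rfl, huv₁⟩⟩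
    · exact hxy.elim
    · exact hxy.elim
    · exact ⟨v₁, hxy, .inr rfl⟩
  back {k x v v₁} h hv₁ := by
    rcases h with ⟨_ | k, u, rfl, huv⟩ | rfl
    · exact ⟨.inr v₁, hv₁, .inr rfl⟩
    · obtain ⟨u₁, hu₁, huv₁⟩ := (ntype_boundedBisim S M M').back huv hv₁
      exact ⟨.inl (k, u₁, v₁), ⟨rfl, hu₁, hv₁, huv₁⟩, .inl ⟨k, u₁, rfl, huv₁⟩⟩
    · exact ⟨.inr v₁, hv₁, .inr rfl⟩

end Kripke

open Kripke in
theorem exists_post_interpolant (A : MF) (p : ℕ) :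
    ∃ E : MF, pFree p E ∧ (A.imp E).Valid ∧
      ∀ B : MF, pFree p B → (A.imp B).Valid → (E.imp B).Valid := by
  set S := A.vars.erase p
  set n := A.depth
  let T : Set (NType S n) := {t | ∃ (M : Kripke) (w : M.W), M.Sat w A ∧ M.ntype S n w = t}
  refine ⟨MF.disj (T.toFinite.toFinset.toList.map (NType.charFormula S n)), ?_, ?_, ?_⟩
  · rw [pFree, ← Bool.not_eq_true, MF.occurs_disj]
    rintro ⟨_, hmem, hp⟩
    obtain ⟨t, -, rfl⟩ := List.mem_map.1 hmem
    exact Finset.notMem_erase p A.vars (NType.occurs_charFormula hp)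
  · intro M w hA
    simp only [sat_disj, List.mem_map, Finset.mem_toList, Set.Finite.mem_toFinset,
      exists_exists_and_eq_and, sat_charFormula_iff]
    exact ⟨_, ⟨M, w, hA, rfl⟩, rfl⟩
  · intro B hB hAB M' w' hE
    simp only [sat_disj, List.mem_map, Finset.mem_toList, Set.Finite.mem_toFinset,
      exists_exists_and_eq_and, sat_charFormula_iff] at hE
    obtain ⟨_, ⟨M, w, hA, rfl⟩, hww'⟩ := hE
    have hA_vars (q : ℕ) (hq : A.occurs q = true) : q ∈ insert p S := by
      simpa [S] using (em (q = p)).imp_right fun hqp => ⟨hqp, MF.mem_vars_of_occurs hq⟩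
    have hB_vars (q : ℕ) (hq : B.occurs q = true) : q ≠ p := by
      rintro rfl
      simp_all [pFree]
    have hA' : (amalgam S M M' p).Sat (.inl (n, w, w')) A :=
      ((amalgam_boundedBisim_left S M M' p).sat_iff hA_vars le_rfl ⟨w', rfl, hww'.symm⟩).2 hA
    exact ((amalgam_boundedBisim_right S M M' p).sat_iff hB_vars le_rfl
      (.inl ⟨n, w, rfl, hww'.symm⟩)).1 (hAB _ _ hA')

theorem exists_pre_interpolant (A : MF) (p : ℕ) :
    ∃ F : MF, pFree p F ∧ (F.imp A).Valid ∧
      ∀ B : MF, pFree p B → (B.imp A).Valid → (B.imp F).Valid := by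
  obtain ⟨E, hE, hAE, hE_min⟩ := exists_post_interpolant A.neg p
  refine ⟨E.neg, by simpa [pFree] using hE, fun M w hE' => ?_, fun B hB hBA => ?_⟩
  · by_contra hA
    exact hE' (hAE M w hA)
  · have hEB := hE_min B.neg (by simpa [pFree] using hB) fun M w hA hB => hA (hBA M w hB)
    exact fun M w hB hE' => hEB M w hE' hB

/-- The modal logic `K` has the uniform interpolation property. -/
theorem K_uniform_interpolation (A : MF) (p : Nat) :
    ∃ Af Ae : MF, pFree p Af ∧ pFree p Ae ∧
      KThm (Af.imp A) ∧ KThm (A.imp Ae) ∧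
      (∀ B : MF, pFree p B → KThm (B.imp A) → KThm (B.imp Af)) ∧
      (∀ B : MF, pFree p B → KThm (A.imp B) → KThm (Ae.imp B)) := by
  obtain ⟨Af, hAf, hAfA, hAf_max⟩ := exists_pre_interpolant A p
  obtain ⟨Ae, hAe, hAAe, hAe_min⟩ := exists_post_interpolant A p
  simp only [kthm_iff_valid]
  exact ⟨Af, Ae, hAf, hAe, hAfA, hAAe, hAf_max, hAe_min⟩
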